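/- arXiv:2312.08757 — 2 statements merged into one kernel-verified Lean document; each statement's English description precedes it below -/
import Mathlib

section
/- For d prime and 1 ≤ Γ ≤ d-1, any unit vector |ψ⟩ ∈ ℂ^d⊗ℂ^d satisfying (𝐗 ⊗ 𝐙^Γ)|ψ⟩ = |ψ⟩ and (𝐙^Γ ⊗ 𝐗)|ψ⟩ = |ψ⟩ is, up to a global phase and local unitaries, the maximally entangled state |φ₊⟩ = (1/√d) Σ_{l=0}^{d-1} |ll⟩; equivalently, the common +1 eigenspace of 𝐗 ⊗ 𝐙^Γ and 𝐙^Γ ⊗ 𝐗 is one-dimensional and its unit vectors have reduced density matrix equal to I/d on each factor. -/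
open Matrix Kronecker

/-- `ω = exp(2πi/d)`. -/
noncomputable def omega (d : ℕ) : ℂ := Complex.exp (2 * Real.pi * Complex.I / d)

/-- Generalized Pauli `𝐗 = Σ_j |j+1 mod d⟩⟨j|` on `ℂ^d`. -/
noncomputable def GX (d : ℕ) : Matrix (Fin d) (Fin d) ℂ :=
  Matrix.of fun i j => if (i : ℕ) = ((j : ℕ) + 1) % d then 1 else 0

/-- Generalized Pauli `𝐙 = Σ_j ω^j |j⟩⟨j|` on `ℂ^d`. -/
noncomputable def GZ (d : ℕ) : Matrix (Fin d) (Fin d) ℂ :=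
  Matrix.diagonal fun j => omega d ^ (j : ℕ)

lemma omega_ne_zero (d : ℕ) : omega d ≠ 0 := Complex.exp_ne_zero _

lemma omega_pow_d {d : ℕ} (hd : d ≠ 0) : omega d ^ d = 1 :=
  (Complex.isPrimitiveRoot_exp d hd).pow_eq_one

lemma omega_pow_mod {d : ℕ} (hd : d ≠ 0) (n : ℕ) : omega d ^ n = omega d ^ (n % d) := by
  conv_lhs => rw [← Nat.mod_add_div n d]
  rw [pow_add, pow_mul, omega_pow_d hd, one_pow, mul_one]

lemma omega_pow_congr {d : ℕ} (hd : d ≠ 0) {a b : ℕ} (h : a % d = b % d) :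
    omega d ^ a = omega d ^ b := by
  rw [omega_pow_mod hd a, omega_pow_mod hd b, h]

lemma star_omega (d : ℕ) : star (omega d) = (omega d)⁻¹ := by
  have : (starRingEnd ℂ) (2 * Real.pi * Complex.I / d) = -(2 * Real.pi * Complex.I / d) := by
    simp [Complex.ext_iff, neg_div]
  show (starRingEnd ℂ) (omega d) = _
  rw [omega, ← Complex.exp_conj, this, Complex.exp_neg]

lemma star_omega_pow (d n : ℕ) : star (omega d ^ n) = (omega d ^ n)⁻¹ := by
  rw [star_pow, star_omega, inv_pow]

lemma sum_zpow_eq_zero {d : ℕ} (hd : d ≠ 0) {m : ℤ} (hm : ¬ (d : ℤ) ∣ m) :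
    ∑ j : Fin d, (omega d ^ m) ^ (j : ℕ) = 0 := by
  have hprim := Complex.isPrimitiveRoot_exp d hd
  set ζ := omega d ^ m with hζ
  have hζd : ζ ^ d = 1 := by
    rw [hζ, ← zpow_natCast (omega d ^ m) d, ← _root_.zpow_mul, mul_comm m (d : ℤ),
      _root_.zpow_mul, zpow_natCast, omega_pow_d hd, _root_.one_zpow]
  have hζ1 : ζ ≠ 1 := fun h => hm ((hprim.zpow_eq_one_iff_dvd m).mp h)
  rw [Fin.sum_univ_eq_sum_range (fun j => ζ ^ j) d, geom_sum_eq hζ1 d, hζd, sub_self, zero_div]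

lemma fin_val_add_one {d : ℕ} [NeZero d] (hd2 : 2 ≤ d) (a : Fin d) :
    ((a + 1 : Fin d) : ℕ) = ((a : ℕ) + 1) % d := by
  rw [Fin.val_add, Fin.val_one', Nat.mod_eq_of_lt (show 1 < d by omega)]

lemma GX_apply {d : ℕ} [NeZero d] (hd2 : 2 ≤ d) (i i' : Fin d) :
    GX d i i' = if i' = i - 1 then 1 else 0 := by
  have key : ∀ a : Fin d, ((i : ℕ) = ((a : ℕ) + 1) % d ↔ i = a + 1) := by
    intro a
    rw [← fin_val_add_one hd2 a, Fin.val_eq_val]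
  unfold GX
  rw [Matrix.of_apply]
  by_cases h : i' = i - 1
  · rw [if_pos ((key i').mpr (by rw [h, sub_add_cancel])), if_pos h]
  · rw [if_neg, if_neg h]
    intro hc
    exact h (by rw [(key i').mp hc, add_sub_cancel_right])

lemma mulVec_XZ {d Γ : ℕ} [NeZero d] (hd2 : 2 ≤ d) (ψ : Fin d × Fin d → ℂ) (i j : Fin d) :
    ((GX d ⊗ₖ (GZ d ^ Γ)).mulVec ψ) (i, j) = omega d ^ (Γ * (j : ℕ)) * ψ (i - 1, j) := by
  simp only [Matrix.mulVec, dotProduct, Fintype.sum_prod_type,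
    Matrix.kroneckerMap_apply, GZ, Matrix.diagonal_pow, Matrix.diagonal_apply, GX_apply hd2,
    Pi.pow_apply, ite_mul, mul_ite, one_mul, zero_mul, mul_zero, Finset.sum_ite_eq,
    Finset.sum_ite_eq', Finset.mem_univ, if_true]
  rw [← pow_mul, mul_comm (j : ℕ) Γ]

lemma mulVec_ZX {d Γ : ℕ} [NeZero d] (hd2 : 2 ≤ d) (ψ : Fin d × Fin d → ℂ) (i j : Fin d) :
    (((GZ d ^ Γ) ⊗ₖ GX d).mulVec ψ) (i, j) = omega d ^ (Γ * (i : ℕ)) * ψ (i, j - 1) := by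
  simp only [Matrix.mulVec, dotProduct, Fintype.sum_prod_type,
    Matrix.kroneckerMap_apply, GZ, Matrix.diagonal_pow, Matrix.diagonal_apply, GX_apply hd2,
    Pi.pow_apply, ite_mul, mul_ite, one_mul, zero_mul, mul_zero, Finset.sum_ite_eq,
    Finset.sum_ite_eq', Finset.mem_univ, if_true, mul_one]
  rw [← pow_mul, mul_comm (i : ℕ) Γ]

open Fin.NatCast in
lemma mem_inf_iff {d Γ : ℕ} [NeZero d] (hd2 : 2 ≤ d) (ψ : Fin d × Fin d → ℂ) :
    ψ ∈ (Module.End.eigenspace (Matrix.mulVecLin (GX d ⊗ₖ (GZ d ^ Γ))) 1 ⊓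
          Module.End.eigenspace (Matrix.mulVecLin ((GZ d ^ Γ) ⊗ₖ GX d)) 1) ↔
      ∀ p : Fin d × Fin d, ψ p = omega d ^ (Γ * (p.1 : ℕ) * (p.2 : ℕ)) * ψ (0, 0) := by
  have hd0 : d ≠ 0 := by omega
  simp only [Submodule.mem_inf, Module.End.mem_eigenspace_iff, one_smul,
    Matrix.mulVecLin_apply]
  constructor
  · rintro ⟨h1, h2⟩
    have hA : ∀ i j : Fin d, ψ (i + 1, j) = omega d ^ (Γ * (j : ℕ)) * ψ (i, j) := by
      intro i j
      have := congrFun h1 (i + 1, j)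
      rw [mulVec_XZ hd2, add_sub_cancel_right] at this
      exact this.symm
    have hB : ∀ i j : Fin d, ψ (i, j + 1) = omega d ^ (Γ * (i : ℕ)) * ψ (i, j) := by
      intro i j
      have := congrFun h2 (i, j + 1)
      rw [mulVec_ZX hd2, add_sub_cancel_right] at this
      exact this.symm
    have row0 : ∀ a : ℕ, ψ ((a : Fin d), 0) = ψ (0, 0) := by
      intro a
      induction a with
      | zero => simp
      | succ a ih =>
        rw [Nat.cast_add, Nat.cast_one, hA, Fin.val_zero, Nat.mul_zero, pow_zero, one_mul, ih]
    have col : ∀ (i : Fin d) (b : ℕ),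
        ψ (i, (b : Fin d)) = omega d ^ (Γ * (i : ℕ) * b) * ψ (i, 0) := by
      intro i b
      induction b with
      | zero => simp
      | succ b ih =>
        rw [Nat.cast_add, Nat.cast_one, hB, ih, ← mul_assoc, ← pow_add]
        congr 1
        ring
    rintro ⟨i, j⟩
    have h3 := col i (j : ℕ)
    rw [Fin.cast_val_eq_self] at h3
    have h4 := row0 (i : ℕ)
    rw [Fin.cast_val_eq_self] at h4
    rw [h3, h4]
  · intro h
    have hstep : ∀ a : Fin d, (((a - 1 : Fin d) : ℕ) + 1) % d = (a : ℕ) % d := by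
      intro a
      rw [← fin_val_add_one hd2 (a - 1), sub_add_cancel, Nat.mod_eq_of_lt a.isLt]
    constructor
    · funext p
      obtain ⟨i, j⟩ := p
      rw [mulVec_XZ hd2, h (i - 1, j), h (i, j), ← mul_assoc, ← pow_add]
      congr 1
      have e1 : Γ * (j : ℕ) + Γ * ((i - 1 : Fin d) : ℕ) * (j : ℕ)
          = Γ * (j : ℕ) * (((i - 1 : Fin d) : ℕ) + 1) := by ring
      have e2 : Γ * (i : ℕ) * (j : ℕ) = Γ * (j : ℕ) * (i : ℕ) := by ring
      rw [e1, e2]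
      exact omega_pow_congr hd0 (Nat.ModEq.mul_left _ (hstep i))
    · funext p
      obtain ⟨i, j⟩ := p
      rw [mulVec_ZX hd2, h (i, j - 1), h (i, j), ← mul_assoc, ← pow_add]
      congr 1
      have e1 : Γ * (i : ℕ) + Γ * (i : ℕ) * ((j - 1 : Fin d) : ℕ)
          = Γ * (i : ℕ) * (((j - 1 : Fin d) : ℕ) + 1) := by ring
      rw [e1]
      exact omega_pow_congr hd0 (Nat.ModEq.mul_left _ (hstep j))

lemma key_entry {d : ℕ} (hd : d.Prime) {Γ : ℕ} (hΓ1 : 1 ≤ Γ) (hΓ2 : Γ < d) (x y : Fin d) :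
    ∑ t : Fin d, omega d ^ (Γ * (x : ℕ) * (t : ℕ)) * star (omega d ^ (Γ * (y : ℕ) * (t : ℕ)))
      = if x = y then (d : ℂ) else 0 := by
  have hd0 : d ≠ 0 := hd.ne_zero
  by_cases h : x = y
  · subst h
    rw [if_pos rfl]
    have : ∀ t : Fin d,
        omega d ^ (Γ * (x : ℕ) * (t : ℕ)) * star (omega d ^ (Γ * (x : ℕ) * (t : ℕ))) = 1 := by
      intro t
      rw [star_omega_pow, mul_inv_cancel₀ (pow_ne_zero _ (omega_ne_zero d))]
    rw [Finset.sum_congr rfl (fun t _ => this t), Finset.sum_const, Finset.card_univ,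
      Fintype.card_fin, nsmul_eq_mul, mul_one]
  · rw [if_neg h]
    have key : ∀ t : Fin d,
        omega d ^ (Γ * (x : ℕ) * (t : ℕ)) * star (omega d ^ (Γ * (y : ℕ) * (t : ℕ)))
          = (omega d ^ ((Γ : ℤ) * ((x : ℕ) - (y : ℕ) : ℤ))) ^ (t : ℕ) := by
      intro t
      rw [star_omega_pow, ← zpow_natCast (omega d) (Γ * (x : ℕ) * (t : ℕ)),
        ← zpow_natCast (omega d) (Γ * (y : ℕ) * (t : ℕ)), ← _root_.zpow_neg,
        ← zpow_add₀ (omega_ne_zero d),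
        ← zpow_natCast (omega d ^ ((Γ : ℤ) * ((x : ℕ) - (y : ℕ) : ℤ))) (t : ℕ),
        ← _root_.zpow_mul]
      congr 1
      push_cast
      ring
    rw [Finset.sum_congr rfl (fun t _ => key t)]
    apply sum_zpow_eq_zero hd0
    intro hdvd
    have hp : Prime (d : ℤ) := Nat.prime_iff_prime_int.mp hd
    rcases hp.dvd_mul.mp hdvd with hc | hc
    · have : d ∣ Γ := Int.natCast_dvd_natCast.mp hc
      have := Nat.le_of_dvd (by omega) this
      omega
    · have hx := x.isLt
      have hy := y.isLt
      have h0 : ((x : ℕ) - (y : ℕ) : ℤ) = 0 :=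
        Int.eq_zero_of_dvd_of_natAbs_lt_natAbs hc (by omega)
      exact h (Fin.ext (by omega))

/-- for prime `d` and `1 ≤ Γ ≤ d-1`, the common `+1`-eigenspace of
`𝐗 ⊗ 𝐙^Γ` and `𝐙^Γ ⊗ 𝐗` on `ℂ^d ⊗ ℂ^d` is one-dimensional, and every unit vector in
it is maximally entangled: both reduced density matrices equal `I/d`. -/
theorem stmt_14 (d : ℕ) (hd : d.Prime) (Γ : ℕ) (hΓ1 : 1 ≤ Γ) (hΓ2 : Γ ≤ d - 1) :
    Module.finrank ℂ
        ↥(Module.End.eigenspace (Matrix.mulVecLin (GX d ⊗ₖ (GZ d ^ Γ))) 1 ⊓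
          Module.End.eigenspace (Matrix.mulVecLin ((GZ d ^ Γ) ⊗ₖ GX d)) 1) = 1 ∧
    ∀ ψ : Fin d × Fin d → ℂ,
      ψ ∈ (Module.End.eigenspace (Matrix.mulVecLin (GX d ⊗ₖ (GZ d ^ Γ))) 1 ⊓
            Module.End.eigenspace (Matrix.mulVecLin ((GZ d ^ Γ) ⊗ₖ GX d)) 1) →
      star ψ ⬝ᵥ ψ = 1 →
        ((Matrix.of fun i i' : Fin d => ∑ j, ψ (i, j) * star (ψ (i', j)))
            = (d : ℂ)⁻¹ • (1 : Matrix (Fin d) (Fin d) ℂ)) ∧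
        ((Matrix.of fun j j' : Fin d => ∑ i, ψ (i, j) * star (ψ (i, j')))
            = (d : ℂ)⁻¹ • (1 : Matrix (Fin d) (Fin d) ℂ)) := by
  have hd2 : 2 ≤ d := hd.two_le
  have hd0 : d ≠ 0 := hd.ne_zero
  have hΓd : Γ < d := by omega
  haveI : NeZero d := ⟨hd0⟩
  have hdc : (d : ℂ) ≠ 0 := Nat.cast_ne_zero.mpr hd0
  set v : Fin d × Fin d → ℂ := fun p => omega d ^ (Γ * (p.1 : ℕ) * (p.2 : ℕ)) with hv
  have hspan : (Module.End.eigenspace (Matrix.mulVecLin (GX d ⊗ₖ (GZ d ^ Γ))) 1 ⊓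
          Module.End.eigenspace (Matrix.mulVecLin ((GZ d ^ Γ) ⊗ₖ GX d)) 1)
      = Submodule.span ℂ {v} := by
    apply le_antisymm
    · intro ψ hψ
      rw [mem_inf_iff hd2] at hψ
      rw [Submodule.mem_span_singleton]
      refine ⟨ψ (0, 0), funext fun p => ?_⟩
      rw [Pi.smul_apply, smul_eq_mul, hv, mul_comm]
      exact (hψ p).symm
    · rw [Submodule.span_singleton_le_iff_mem, mem_inf_iff hd2]
      intro p
      simp [hv]
  constructor
  · rw [hspan]
    apply finrank_span_singleton
    intro hv0
    have := congrFun hv0 (0, 0)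
    simp [hv] at this
  · intro ψ hmem hnorm
    rw [mem_inf_iff hd2] at hmem
    set c := ψ (0, 0) with hc
    -- norm computation
    have hterm : ∀ p : Fin d × Fin d, star (ψ p) * ψ p = star c * c := by
      intro p
      rw [hmem p, star_mul', star_omega_pow]
      have hne : omega d ^ (Γ * (p.1 : ℕ) * (p.2 : ℕ)) ≠ 0 :=
        pow_ne_zero _ (omega_ne_zero d)
      field_simp
    rw [dotProduct] at hnorm
    simp only [Pi.star_apply] at hnorm
    rw [Finset.sum_congr rfl (fun p _ => hterm p), Finset.sum_const, Finset.card_univ,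
      Fintype.card_prod, Fintype.card_fin, nsmul_eq_mul, Nat.cast_mul] at hnorm
    have hcc : c * star c = ((d : ℂ) * (d : ℂ))⁻¹ := by
      have h2 : ((d : ℂ) * (d : ℂ)) * (c * star c) = 1 := by
        rw [mul_comm c (star c)]; exact hnorm
      exact eq_inv_of_mul_eq_one_left (by rw [mul_comm]; exact h2)
    have hdd : (d : ℂ) * ((d : ℂ) * (d : ℂ))⁻¹ = (d : ℂ)⁻¹ := by
      field_simp
    constructor
    · ext i i'
      rw [Matrix.of_apply]
      have hsum : ∀ j : Fin d, ψ (i, j) * star (ψ (i', j))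
          = omega d ^ (Γ * (i : ℕ) * (j : ℕ)) * star (omega d ^ (Γ * (i' : ℕ) * (j : ℕ)))
            * (c * star c) := by
        intro j
        rw [hmem (i, j), hmem (i', j), star_mul', star_omega_pow]
        ring
      rw [Finset.sum_congr rfl (fun j _ => hsum j), ← Finset.sum_mul,
        key_entry hd hΓ1 hΓd i i', hcc, Matrix.smul_apply, Matrix.one_apply, smul_eq_mul]
      by_cases h : i = i'
      · rw [if_pos h, if_pos h, hdd, mul_one]
      · rw [if_neg h, if_neg h, zero_mul, mul_zero]
    · ext j j'
      rw [Matrix.of_apply]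
      have hsum : ∀ i : Fin d, ψ (i, j) * star (ψ (i, j'))
          = omega d ^ (Γ * (i : ℕ) * (j : ℕ)) * star (omega d ^ (Γ * (i : ℕ) * (j' : ℕ)))
            * (c * star c) := by
        intro i
        rw [hmem (i, j), hmem (i, j'), star_mul', star_omega_pow]
        ring
      have hswap : ∀ i : Fin d,
          omega d ^ (Γ * (i : ℕ) * (j : ℕ)) * star (omega d ^ (Γ * (i : ℕ) * (j' : ℕ)))
            = omega d ^ (Γ * (j : ℕ) * (i : ℕ)) * star (omega d ^ (Γ * (j' : ℕ) * (i : ℕ))) := by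
        intro i
        rw [show Γ * (i : ℕ) * (j : ℕ) = Γ * (j : ℕ) * (i : ℕ) by ring,
          show Γ * (i : ℕ) * (j' : ℕ) = Γ * (j' : ℕ) * (i : ℕ) by ring]
      rw [Finset.sum_congr rfl (fun i _ => (hsum i).trans (by rw [hswap i])), ← Finset.sum_mul,
        key_entry hd hΓ1 hΓd j j', hcc, Matrix.smul_apply, Matrix.one_apply, smul_eq_mul]
      by_cases h : j = j'
      · rw [if_pos h, if_pos h, hdd, mul_one]
      · rw [if_neg h, if_neg h, zero_mul, mul_zero]
end

section
/- Let N ≥ 2, let T be the set of partitions of {1,...,N} into at least two blocks, and let (p_t)_{t∈T} together with p_NL be nonnegative reals with Σ_t p_t + p_NL = 1. For each unordered pair {α,β} define η_L^{αβ} = Σ_{t separates α,β} p_t and suppose q^{αβ} are reals with q^{αβ} ≥ η_L^{αβ} for all pairs. Then p_NL ≥ 1 - (1/(N-1)) Σ_{1 ≤ α < β ≤ N} q^{αβ}. -/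
open scoped Classical

/-- `t` is a partition of `Fin N`: blocks are nonempty and every element lies in
exactly one block. -/
def IsPart {N : ℕ} (t : Finset (Finset (Fin N))) : Prop :=
  (∀ b ∈ t, b.Nonempty) ∧ ∀ x : Fin N, ∃! b, b ∈ t ∧ x ∈ b

/-- The set of all partitions of `Fin N` into at least two blocks. -/
noncomputable def Partitions2 (N : ℕ) : Finset (Finset (Finset (Fin N))) :=
  Finset.univ.filter fun t => IsPart t ∧ 2 ≤ t.card

/-- `t` separates `α` and `β`: no block contains both. -/
def Separates {N : ℕ} (t : Finset (Finset (Fin N))) (α β : Fin N) : Prop :=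
  ∀ b ∈ t, ¬(α ∈ b ∧ β ∈ b)

lemma sep_symm {N : ℕ} {t : Finset (Finset (Fin N))} {α β : Fin N}
    (h : Separates t α β) : Separates t β α :=
  fun b hb hab => h b hb ⟨hab.2, hab.1⟩

lemma card_sep {N : ℕ} (hN : 2 ≤ N) (t : Finset (Finset (Fin N)))
    (hpart : IsPart t) (hc2 : 2 ≤ t.card) :
    N - 1 ≤ (Finset.univ.filter
      (fun pr : Fin N × Fin N => pr.1 < pr.2 ∧ Separates t pr.1 pr.2)).card := by
  haveI : NeZero N := ⟨by omega⟩
  obtain ⟨hne, huniq⟩ := hpart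
  obtain ⟨b0, ⟨hb0t, hb00⟩, hb0u⟩ := huniq 0
  obtain ⟨b1, hb1t, hb1ne⟩ : ∃ b ∈ t, b ≠ b0 := by
    by_contra h
    push_neg at h
    have hsub : t ⊆ {b0} := fun b hb => Finset.mem_singleton.mpr (h b hb)
    have := Finset.card_le_card hsub
    simp at this
    omega
  obtain ⟨β₀, hβ₀⟩ := hne b1 hb1t
  have hblock : ∀ (x : Fin N) (b b' : Finset (Fin N)), b ∈ t → b' ∈ t → x ∈ b → x ∈ b' → b = b' := by
    intro x b b' hb hb' hx hx'
    obtain ⟨c, _, hcu⟩ := huniq x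
    rw [hcu b ⟨hb, hx⟩, hcu b' ⟨hb', hx'⟩]
  have hβ₀b0 : β₀ ∉ b0 := fun h => hb1ne (hblock β₀ b1 b0 hb1t hb0t hβ₀ h)
  have hsep1 : ∀ α ∈ b0, Separates t α β₀ := by
    intro α hα b hb hab
    have e1 : b = b0 := hblock α b b0 hb hb0t hab.1 hα
    exact hβ₀b0 (e1 ▸ hab.2)
  have hsep2 : ∀ α : Fin N, α ∉ b0 → Separates t 0 α := by
    intro α hα b hb hab
    have e1 : b = b0 := hblock 0 b b0 hb hb0t hab.1 hb00
    exact hα (e1 ▸ hab.2)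
  set f : Fin N → Fin N × Fin N :=
    fun α => if α ∈ b0 then (if α < β₀ then (α, β₀) else (β₀, α)) else ((0 : Fin N), α) with hf
  have hβ₀0 : β₀ ≠ 0 := fun h => hβ₀b0 (h ▸ hb00)
  have hcard : (Finset.univ.erase (0 : Fin N)).card = N - 1 := by
    rw [Finset.card_erase_of_mem (Finset.mem_univ _), Finset.card_univ, Fintype.card_fin]
  have hmaps : ∀ α ∈ Finset.univ.erase (0 : Fin N),
      f α ∈ Finset.univ.filter
        (fun pr : Fin N × Fin N => pr.1 < pr.2 ∧ Separates t pr.1 pr.2) := by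
    intro α hα
    have hα0 : α ≠ 0 := (Finset.mem_erase.mp hα).1
    simp only [Finset.mem_filter, Finset.mem_univ, true_and]
    by_cases hb : α ∈ b0
    · have hne' : α ≠ β₀ := fun h => hβ₀b0 (h ▸ hb)
      by_cases hlt : α < β₀
      · simp only [hf, if_pos hb, if_pos hlt]
        exact ⟨hlt, hsep1 α hb⟩
      · simp only [hf, if_pos hb, if_neg hlt]
        exact ⟨lt_of_le_of_ne (not_lt.mp hlt) (Ne.symm hne'), sep_symm (hsep1 α hb)⟩
    · simp only [hf, if_neg hb]
      exact ⟨lt_of_le_of_ne (Fin.zero_le α) (Ne.symm hα0), hsep2 α hb⟩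
  have hinj : Set.InjOn f (Finset.univ.erase (0 : Fin N)) := by
    intro a ha c hc hfeq
    have ha0 : a ≠ 0 := (Finset.mem_erase.mp (Finset.mem_coe.mp ha)).1
    have hc0 : c ≠ 0 := (Finset.mem_erase.mp (Finset.mem_coe.mp hc)).1
    simp only [hf] at hfeq
    by_cases h1 : a ∈ b0 <;> by_cases h2 : c ∈ b0
    · have hane : a ≠ β₀ := fun h => hβ₀b0 (h ▸ h1)
      have hcne : c ≠ β₀ := fun h => hβ₀b0 (h ▸ h2)
      rw [if_pos h1, if_pos h2] at hfeq
      by_cases g1 : a < β₀ <;> by_cases g2 : c < β₀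
      · rw [if_pos g1, if_pos g2, Prod.mk.injEq] at hfeq; exact hfeq.1
      · rw [if_pos g1, if_neg g2, Prod.mk.injEq] at hfeq; exact absurd hfeq.1 hane
      · rw [if_neg g1, if_pos g2, Prod.mk.injEq] at hfeq; exact absurd hfeq.1.symm hcne
      · rw [if_neg g1, if_neg g2, Prod.mk.injEq] at hfeq; exact hfeq.2
    · rw [if_pos h1, if_neg h2] at hfeq
      exfalso
      by_cases g1 : a < β₀
      · rw [if_pos g1, Prod.mk.injEq] at hfeq; exact ha0 hfeq.1
      · rw [if_neg g1, Prod.mk.injEq] at hfeq; exact hβ₀0 hfeq.1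
    · rw [if_neg h1, if_pos h2] at hfeq
      exfalso
      by_cases g2 : c < β₀
      · rw [if_pos g2, Prod.mk.injEq] at hfeq; exact hc0 hfeq.1.symm
      · rw [if_neg g2, Prod.mk.injEq] at hfeq; exact hβ₀0 hfeq.1.symm
    · rw [if_neg h1, if_neg h2, Prod.mk.injEq] at hfeq
      exact hfeq.2
  calc N - 1 = (Finset.univ.erase (0 : Fin N)).card := hcard.symm
    _ ≤ _ := Finset.card_le_card_of_injOn f hmaps hinj

/-- abstract form of Theorem 2. If `(p_t)` and `p_NL` are nonnegative with
`Σ_t p_t + p_NL = 1`, and for every pair of distinct parties `q α β` dominates the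
separated weight `η_L^{αβ} = Σ_{t separates α,β} p_t`, then
`p_NL ≥ 1 - (1/(N-1)) Σ_{α<β} q α β`. -/
theorem stmt_18 (N : ℕ) (hN : 2 ≤ N)
    (p : Finset (Finset (Fin N)) → ℝ) (hp : ∀ t, 0 ≤ p t)
    (pNL : ℝ) (hpNL : 0 ≤ pNL)
    (hsum : (∑ t ∈ Partitions2 N, p t) + pNL = 1)
    (q : Fin N → Fin N → ℝ)
    (hq : ∀ α β : Fin N, α ≠ β →
      (∑ t ∈ Partitions2 N, if Separates t α β then p t else 0) ≤ q α β) :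
    pNL ≥ 1 - (1 / (N - 1 : ℝ)) *
      ∑ α : Fin N, ∑ β ∈ Finset.univ.filter (fun β => α < β), q α β := by
  have hN1 : (0:ℝ) < (N:ℝ) - 1 := by
    have : (2:ℝ) ≤ (N:ℝ) := by exact_mod_cast hN
    linarith
  set Q := ∑ α : Fin N, ∑ β ∈ Finset.univ.filter (fun β => α < β), q α β with hQ
  have hsum_eq : ∀ t : Finset (Finset (Fin N)),
      (∑ α : Fin N, ∑ β ∈ Finset.univ.filter (fun β => α < β),
        (if Separates t α β then p t else 0))
      = ((Finset.univ.filter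
          (fun pr : Fin N × Fin N => pr.1 < pr.2 ∧ Separates t pr.1 pr.2)).card : ℝ) * p t := by
    intro t
    calc ∑ α : Fin N, ∑ β ∈ Finset.univ.filter (fun β => α < β),
            (if Separates t α β then p t else 0)
        = ∑ α : Fin N, ∑ β : Fin N, (if α < β ∧ Separates t α β then p t else 0) := by
          refine Finset.sum_congr rfl fun α _ => ?_
          rw [Finset.sum_filter]
          refine Finset.sum_congr rfl fun β _ => ?_
          by_cases h1 : α < β <;> by_cases h2 : Separates t α β <;>
            simp only [h1, h2, if_true, if_false, true_and, false_and]
      _ = ∑ pr : Fin N × Fin N, (if pr.1 < pr.2 ∧ Separates t pr.1 pr.2 then p t else 0) := by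
          rw [Fintype.sum_prod_type]
      _ = _ := by
          rw [← Finset.sum_filter, Finset.sum_const, nsmul_eq_mul]
  have h1 : ((N:ℝ) - 1) * (1 - pNL) ≤ Q := by
    have e0 : 1 - pNL = ∑ t ∈ Partitions2 N, p t := by linarith
    rw [e0, Finset.mul_sum]
    calc ∑ t ∈ Partitions2 N, ((N:ℝ) - 1) * p t
        ≤ ∑ t ∈ Partitions2 N, ∑ α : Fin N, ∑ β ∈ Finset.univ.filter (fun β => α < β),
            (if Separates t α β then p t else 0) := by
          refine Finset.sum_le_sum fun t ht => ?_
          simp only [Partitions2, Finset.mem_filter, Finset.mem_univ, true_and] at ht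
          have hc := card_sep hN t ht.1 ht.2
          rw [hsum_eq t]
          have hcc : ((N:ℝ) - 1) ≤ ((Finset.univ.filter
              (fun pr : Fin N × Fin N => pr.1 < pr.2 ∧ Separates t pr.1 pr.2)).card : ℝ) := by
            have h2 : ((N - 1 : ℕ) : ℝ) ≤ _ := Nat.cast_le.mpr hc
            calc ((N:ℝ) - 1) = ((N - 1 : ℕ) : ℝ) := by
                  rw [Nat.cast_sub (by omega)]; norm_num
              _ ≤ _ := h2
          exact mul_le_mul_of_nonneg_right hcc (hp t)
      _ = ∑ α : Fin N, ∑ β ∈ Finset.univ.filter (fun β => α < β),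
            ∑ t ∈ Partitions2 N, (if Separates t α β then p t else 0) := by
          rw [Finset.sum_comm]
          exact Finset.sum_congr rfl fun α _ => Finset.sum_comm
      _ ≤ Q := by
          refine Finset.sum_le_sum fun α _ => ?_
          refine Finset.sum_le_sum fun β hβ => ?_
          exact hq α β (ne_of_lt (Finset.mem_filter.mp hβ).2)
  have hcancel : (1/((N:ℝ)-1)) * ((N:ℝ)-1) = 1 := by field_simp
  have h2 := mul_le_mul_of_nonneg_left h1 (le_of_lt (one_div_pos.mpr hN1))
  rw [← mul_assoc, hcancel, one_mul] at h2
  linarith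
end
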